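/- arXiv:1808.08067 — 2 statements merged into one kernel-verified Lean document; each statement's English description precedes it below -/
import Mathlib

section
/- If a hypergraph E has the property that every non-empty subhypergraph of E has a maximal edge, then no subhypergraph of E is isomorphic to the hypergraph ω; and conversely. -/
/-- `C` is a cover of the hypergraph `E`. -/
def IsCover {α : Type*} (E C : Set (Set α)) : Prop :=
  C ⊆ E ∧ ⋃₀ C = ⋃₀ E

/-- `C` is a minimal cover of the hypergraph `E`. -/
def IsMinimalCover {α : Type*} (E C : Set (Set α)) : Prop :=
  IsCover E C ∧ ∀ D ⊆ C, IsCover E D → D = C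

/-- `S` is a subhypergraph of `E`. -/
def IsSubhypergraph {α : Type*} (E S : Set (Set α)) : Prop :=
  ∃ F ⊆ E, ∃ A ⊆ ⋃₀ F, S = (fun T => T ∩ A) '' F

/-- `S` has a maximal edge. -/
def HasMaximalEdge {α : Type*} (S : Set (Set α)) : Prop :=
  ∃ M ∈ S, ∀ T ∈ S, M ⊆ T → T = M

/-- `S` is isomorphic to the hypergraph ω, whose vertex set is ℕ and whose
edges are the initial segments `{0, …, n-1}` for `n : ℕ`. -/
def IsoToOmega {α : Type*} (S : Set (Set α)) : Prop :=
  ∃ f : ℕ → α, Function.Injective f ∧ Set.range f = ⋃₀ S ∧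
    S = {T | ∃ n : ℕ, T = f '' Set.Iio n}

/-!
A hypergraph isomorphic to ω is a strictly increasing chain of edges, so it has no maximal edge.
Conversely, a non-empty subhypergraph without a maximal edge contains a strictly increasing
sequence of edges `c 0 ⊂ c 1 ⊂ ⋯`; choosing `f n ∈ c (n + 1) \ c n` and restricting the edges
`c n` to the vertices `range f` turns `c n` into `f '' {0, …, n - 1}`, a copy of ω.
-/

section

variable {α : Type*}

theorem IsSubhypergraph.trans {E S T : Set (Set α)}
    (hES : IsSubhypergraph E S) (hST : IsSubhypergraph S T) : IsSubhypergraph E T := by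
  obtain ⟨F, hF, A, hA, rfl⟩ := hES
  obtain ⟨G, hG, B, hB, rfl⟩ := hST
  refine ⟨{U ∈ F | U ∩ A ∈ G}, fun U hU => hF hU.1, A ∩ B, ?_, ?_⟩
  · intro x hx
    obtain ⟨_, hg, hxg⟩ := hB hx.2
    obtain ⟨U, hU, rfl⟩ := hG hg
    exact ⟨U, ⟨hU, hg⟩, hxg.1⟩
  · ext V
    constructor
    · rintro ⟨_, hg, rfl⟩
      obtain ⟨U, hU, rfl⟩ := hG hg
      exact ⟨U, ⟨hU, hg⟩, by simp [Set.inter_assoc]⟩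
    · rintro ⟨U, ⟨hU, hUA⟩, rfl⟩
      exact ⟨U ∩ A, hUA, by simp [Set.inter_assoc]⟩

theorem IsoToOmega.not_hasMaximalEdge {S : Set (Set α)} (hS : IsoToOmega S) :
    ¬ HasMaximalEdge S := by
  obtain ⟨f, hf, -, rfl⟩ := hS
  rintro ⟨_, ⟨n, rfl⟩, hmax⟩
  have hsucc : f '' Set.Iio (n + 1) = f '' Set.Iio n :=
    hmax _ ⟨n + 1, rfl⟩ (Set.image_mono (Set.Iio_subset_Iio n.le_succ))
  have hfn : f n ∈ f '' Set.Iio n := hsucc ▸ Set.mem_image_of_mem f n.lt_succ_self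
  rw [hf.mem_set_image] at hfn
  exact lt_irrefl n hfn

theorem IsoToOmega.nonempty {S : Set (Set α)} (hS : IsoToOmega S) : S.Nonempty := by
  obtain ⟨f, -, -, rfl⟩ := hS
  exact ⟨_, 0, rfl⟩

theorem exists_strictMono_of_not_hasMaximalEdge {S : Set (Set α)} (hne : S.Nonempty)
    (hS : ¬ HasMaximalEdge S) : ∃ c : ℕ → Set α, StrictMono c ∧ ∀ n, c n ∈ S := by
  have : Nonempty S := hne.to_subtype
  have : NoMaxOrder S := ⟨fun M => by
    by_contra! hM
    exact hS ⟨M, M.2, fun T hT hMT =>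
      congrArg Subtype.val (eq_of_le_of_not_lt (b := ⟨T, hT⟩) hMT (hM _)).symm⟩⟩
  obtain ⟨c, hc⟩ := Nat.exists_strictMono S
  exact ⟨fun n => c n, hc, fun n => (c n).2⟩

theorem StrictMono.exists_mem_iff_lt {c : ℕ → Set α} (hc : StrictMono c) :
    ∃ f : ℕ → α, ∀ k n, f k ∈ c n ↔ k < n := by
  choose f hf using fun n : ℕ => Set.exists_of_ssubset (hc n.lt_succ_self)
  refine ⟨f, fun k n => ⟨fun hk => ?_, fun hkn => hc.monotone hkn (hf k).1⟩⟩
  by_contra! hnk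
  exact (hf k).2 (hc.monotone hnk hk)

theorem isoToOmega_image_inter_range {c : ℕ → Set α} {f : ℕ → α}
    (hf : ∀ k n, f k ∈ c n ↔ k < n) : IsoToOmega ((· ∩ Set.range f) '' Set.range c) := by
  have hinj : Function.Injective f := fun j k hjk => by
    have hjk' : j < k + 1 := (hf j (k + 1)).mp (hjk ▸ (hf k (k + 1)).mpr k.lt_succ_self)
    have hkj : k < j + 1 := (hf k (j + 1)).mp (hjk ▸ (hf j (j + 1)).mpr j.lt_succ_self)
    omega
  have hcut : ∀ n, c n ∩ Set.range f = f '' Set.Iio n := fun n => by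
    ext x
    constructor
    · rintro ⟨hx, k, rfl⟩
      exact ⟨k, (hf k n).mp hx, rfl⟩
    · rintro ⟨k, hk, rfl⟩
      exact ⟨(hf k n).mpr hk, k, rfl⟩
  have hedges : (· ∩ Set.range f) '' Set.range c = Set.range fun n => f '' Set.Iio n := by
    rw [← Set.range_comp]
    exact congrArg Set.range (funext hcut)
  refine ⟨f, hinj, ?_, ?_⟩
  · rw [hedges, Set.sUnion_range, ← Set.image_iUnion, Set.iUnion_Iio, Set.image_univ]
  · rw [hedges]
    ext T
    exact ⟨fun ⟨n, hn⟩ => ⟨n, hn.symm⟩, fun ⟨n, hn⟩ => ⟨n, hn.symm⟩⟩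

end

theorem stmt_5 {α : Type*} (E : Set (Set α)) :
    (∀ S, IsSubhypergraph E S → S.Nonempty → HasMaximalEdge S) ↔
      (∀ S, IsSubhypergraph E S → ¬ IsoToOmega S) := by
  constructor
  · intro h S hS hiso
    exact hiso.not_hasMaximalEdge (h S hS hiso.nonempty)
  · intro h S hS hne
    by_contra hmax
    obtain ⟨c, hc, hcS⟩ := exists_strictMono_of_not_hasMaximalEdge hne hmax
    obtain ⟨f, hf⟩ := hc.exists_mem_iff_lt
    have hfc : Set.range f ⊆ ⋃₀ Set.range c := by
      rintro _ ⟨k, rfl⟩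
      exact ⟨c (k + 1), ⟨k + 1, rfl⟩, (hf k (k + 1)).mpr k.lt_succ_self⟩
    exact h _ (hS.trans ⟨_, Set.range_subset_iff.mpr hcS, _, hfc, rfl⟩)
      (isoToOmega_image_inter_range hf)
end

section
/- A countable hypergraph E has a minimal cover if every infinite set I ⊆ ⋃E contains a finite subset F ⊆ I such that the family E_F := {S ∈ E : F ⊆ S} is finite. -/
/-!
We build a minimal cover greedily, covering the vertices one at a time and tagging each chosen
edge with a *private* vertex lying in no other chosen edge; a cover in which every edge has a
private vertex is minimal. To cover an uncovered vertex `v₀` while keeping every remaining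
vertex coverable, we work in the hypergraph `E'` of edges avoiding all private vertices so far
and pick an uncovered `w` whose set of incident edges in `E'` is inclusion-minimal among those
contained in that of `v₀`; any edge through `w` then does the job. Such a minimal `w` exists
because an infinite strictly decreasing chain of incident-edge sets along vertices `x₀, x₁, …`
would give an infinite vertex set each of whose finite subsets lies in infinitely many edges.
-/

section

open Set

variable {α : Type*}

def incidentEdges (E : Set (Set α)) (u : α) : Set (Set α) := {S ∈ E | u ∈ S}

theorem wellFounded_incidentEdges_ssubset {E E' : Set (Set α)}
    (h : ∀ I ⊆ ⋃₀ E, I.Infinite → ∃ F ⊆ I, F.Finite ∧ {S ∈ E | F ⊆ S}.Finite)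
    (hE' : E' ⊆ E) :
    WellFounded fun u v : α => incidentEdges E' u ⊂ incidentEdges E' v := by
  refine wellFounded_iff_isEmpty_descending_chain.2 ⟨fun ⟨x, hx⟩ => ?_⟩
  set s := fun n => incidentEdges E' (x n)
  have hs : StrictAnti s := strictAnti_nat_of_succ_lt hx
  have hx_inj : x.Injective := Function.Injective.of_comp (f := incidentEdges E') hs.injective
  have hx_range : range x ⊆ ⋃₀ E := by
    rintro _ ⟨n, rfl⟩
    obtain ⟨S, hSE', hxS⟩ := nonempty_of_ssubset' (hx n)
    exact ⟨S, hE' hSE', hxS⟩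
  obtain ⟨F, hFx, hF, hEF⟩ := h _ hx_range (infinite_range_of_injective hx_inj)
  obtain ⟨N, hN⟩ := (hF.preimage hx_inj.injOn).bddAbove
  have hsN : (s N).Finite := by
    refine hEF.subset fun S ⟨hSE', hxS⟩ => ⟨hE' hSE', fun y hy => ?_⟩
    obtain ⟨k, rfl⟩ := hFx hy
    exact (hs.antitone (hN hy) ⟨hSE', hxS⟩).2
  refine infinite_range_of_injective (hs.injective.comp (add_right_injective N)) ?_
  exact hsN.finite_subsets.subset <| range_subset_iff.2 fun n => hs.antitone (N.le_add_right n)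

theorem isMinimalCover_of_forall_exists_private {E C : Set (Set α)} (hC : IsCover E C)
    (hpriv : ∀ S ∈ C, ∃ w ∈ S, ∀ T ∈ C, w ∈ T → T = S) : IsMinimalCover E C := by
  refine ⟨hC, fun D hDC hD => hDC.antisymm fun S hS => ?_⟩
  obtain ⟨w, hwS, hw⟩ := hpriv S hS
  obtain ⟨T, hTD, hwT⟩ : w ∈ ⋃₀ D := hD.2 ▸ hC.2 ▸ ⟨S, hS, hwS⟩
  exact hw T (hDC hTD) hwT ▸ hTD

structure PrivatelyWitnessed (E : Set (Set α)) (P : Set (Set α × α)) : Prop where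
  fst_mem : ∀ p ∈ P, p.1 ∈ E
  snd_mem_fst : ∀ p ∈ P, p.2 ∈ p.1
  eq_of_snd_mem : ∀ p ∈ P, ∀ q ∈ P, p.2 ∈ q.1 → p = q

def Extendable (E : Set (Set α)) (P : Set (Set α × α)) : Prop :=
  ∀ u ∈ ⋃₀ E, (∀ p ∈ P, u ∉ p.1) → ∃ S ∈ E, u ∈ S ∧ ∀ p ∈ P, p.2 ∉ S

theorem extendable_empty (E : Set (Set α)) : Extendable E ∅ := by
  rintro u ⟨S, hSE, huS⟩ -
  exact ⟨S, hSE, huS, by simp⟩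

namespace PrivatelyWitnessed

variable {E : Set (Set α)} {P : Set (Set α × α)}

theorem empty : PrivatelyWitnessed E (∅ : Set (Set α × α)) :=
  ⟨by simp, by simp, by simp⟩

theorem insert (hP : PrivatelyWitnessed E P) {T : Set α} {w : α} (hTE : T ∈ E) (hwT : w ∈ T)
    (hw : ∀ p ∈ P, w ∉ p.1) (hT : ∀ p ∈ P, p.2 ∉ T) :
    PrivatelyWitnessed E (insert (T, w) P) := by
  refine ⟨?_, ?_, ?_⟩
  · rintro p (rfl | hp)
    exacts [hTE, hP.fst_mem p hp]
  · rintro p (rfl | hp)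
    exacts [hwT, hP.snd_mem_fst p hp]
  · rintro p (rfl | hp) q (rfl | hq) hpq
    exacts [rfl, absurd hpq (hw q hq), absurd hpq (hT p hp), hP.eq_of_snd_mem p hp q hq hpq]

theorem iUnion {P : ℕ → Set (Set α × α)} (hmono : Monotone P)
    (hP : ∀ n, PrivatelyWitnessed E (P n)) : PrivatelyWitnessed E (⋃ n, P n) := by
  refine ⟨?_, ?_, ?_⟩
  · simp only [mem_iUnion]
    rintro p ⟨n, hp⟩
    exact (hP n).fst_mem p hp
  · simp only [mem_iUnion]
    rintro p ⟨n, hp⟩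
    exact (hP n).snd_mem_fst p hp
  · simp only [mem_iUnion]
    rintro p ⟨m, hp⟩ q ⟨n, hq⟩
    exact (hP (max m n)).eq_of_snd_mem p (hmono (le_max_left m n) hp) q
      (hmono (le_max_right m n) hq)

theorem image_fst_subset (hP : PrivatelyWitnessed E P) : Prod.fst '' P ⊆ E := by
  rintro _ ⟨p, hp, rfl⟩
  exact hP.fst_mem p hp

theorem isMinimalCover (hP : PrivatelyWitnessed E P) (hcov : ⋃₀ (Prod.fst '' P) = ⋃₀ E) :
    IsMinimalCover E (Prod.fst '' P) := by
  refine isMinimalCover_of_forall_exists_private ⟨hP.image_fst_subset, hcov⟩ ?_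
  rintro _ ⟨p, hp, rfl⟩
  refine ⟨p.2, hP.snd_mem_fst p hp, ?_⟩
  rintro _ ⟨q, hq, rfl⟩ hpq
  rw [hP.eq_of_snd_mem p hp q hq hpq]

end PrivatelyWitnessed

theorem Extendable.exists_insert {E : Set (Set α)} {P : Set (Set α × α)}
    (h : ∀ I ⊆ ⋃₀ E, I.Infinite → ∃ F ⊆ I, F.Finite ∧ {S ∈ E | F ⊆ S}.Finite)
    (hext : Extendable E P) (hP : PrivatelyWitnessed E P)
    {v₀ : α} (hv₀ : v₀ ∈ ⋃₀ E) (hv₀P : ∀ p ∈ P, v₀ ∉ p.1) :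
    ∃ T w, PrivatelyWitnessed E (insert (T, w) P) ∧ Extendable E (insert (T, w) P) ∧ v₀ ∈ T := by
  set E' := {S ∈ E | ∀ p ∈ P, p.2 ∉ S}
  set U := {u ∈ ⋃₀ E | ∀ p ∈ P, u ∉ p.1}
  obtain ⟨w, ⟨⟨hwE, hwP⟩, hwv₀⟩, hmin⟩ :=
    (wellFounded_incidentEdges_ssubset h (sep_subset E _)).has_min
      {u ∈ U | incidentEdges E' u ⊆ incidentEdges E' v₀} ⟨v₀, ⟨hv₀, hv₀P⟩, subset_rfl⟩
  obtain ⟨T, hTE, hwT, hT⟩ := hext w hwE hwP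
  have hTw : T ∈ incidentEdges E' w := ⟨⟨hTE, hT⟩, hwT⟩
  refine ⟨T, w, hP.insert hTE hwT hwP hT, ?_, (hwv₀ hTw).2⟩
  intro u hu hu_unc
  by_contra! hno
  have huw : incidentEdges E' u ⊆ incidentEdges E' w := fun S ⟨⟨hSE, hSP⟩, huS⟩ => by
    obtain ⟨p, rfl | hp, hpS⟩ := hno S hSE huS
    exacts [⟨⟨hSE, hSP⟩, hpS⟩, absurd hpS (hSP p hp)]
  -- minimality of `w` forces `u` and `w` to have the same incident edges, so `u ∈ T`
  have hwu : incidentEdges E' w ⊆ incidentEdges E' u := not_not.1 fun hnot =>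
    hmin u ⟨⟨hu, fun p hp => hu_unc p (mem_insert_of_mem _ hp)⟩, huw.trans hwv₀⟩
      (huw.ssubset_of_not_superset hnot)
  exact hu_unc (T, w) (mem_insert _ _) (hwu hTw).2

theorem exists_privatelyWitnessed_cover {E : Set (Set α)}
    (h : ∀ I ⊆ ⋃₀ E, I.Infinite → ∃ F ⊆ I, F.Finite ∧ {S ∈ E | F ⊆ S}.Finite)
    (hV : (⋃₀ E).Countable) :
    ∃ P : Set (Set α × α), PrivatelyWitnessed E P ∧ ⋃₀ (Prod.fst '' P) = ⋃₀ E := by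
  rcases (⋃₀ E).eq_empty_or_nonempty with hV₀ | hV₀
  · exact ⟨∅, .empty, by simp [hV₀]⟩
  obtain ⟨v, hv⟩ := hV.exists_eq_range hV₀
  have hstep : ∀ (P : {P // PrivatelyWitnessed E P ∧ Extendable E P}) (a : α),
      ∃ Q : {P // PrivatelyWitnessed E P ∧ Extendable E P},
        P.1 ⊆ Q.1 ∧ (a ∈ ⋃₀ E → ∃ q ∈ Q.1, a ∈ q.1) := by
    rintro ⟨P, hP, hext⟩ a
    by_cases ha : a ∈ ⋃₀ E ∧ ∀ p ∈ P, a ∉ p.1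
    · obtain ⟨T, w, hP', hext', haT⟩ := hext.exists_insert h hP ha.1 ha.2
      exact ⟨⟨_, hP', hext'⟩, subset_insert _ _, fun _ => ⟨_, mem_insert _ _, haT⟩⟩
    · push Not at ha
      exact ⟨⟨P, hP, hext⟩, subset_rfl, ha⟩
  choose next hnext_sub hnext_cov using hstep
  let Q : ℕ → {P // PrivatelyWitnessed E P ∧ Extendable E P} := fun n =>
    Nat.rec ⟨∅, .empty, extendable_empty E⟩ (fun k Qk => next Qk (v k)) n
  have hQ : Monotone fun n => (Q n).1 := monotone_nat_of_le_succ fun n => hnext_sub _ _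
  have hPW := PrivatelyWitnessed.iUnion hQ fun n => (Q n).2.1
  refine ⟨_, hPW, (sUnion_subset_sUnion hPW.image_fst_subset).antisymm ?_⟩
  rw [hv]
  rintro _ ⟨n, rfl⟩
  obtain ⟨q, hq, hvq⟩ := hnext_cov (Q n) (v n) (hv ▸ mem_range_self n)
  exact ⟨q.1, mem_image_of_mem _ (mem_iUnion_of_mem (n + 1) hq), hvq⟩

end

theorem stmt_6_general {α : Type*} (E : Set (Set α))
    (hVc : (⋃₀ E).Countable)
    (h : ∀ I ⊆ ⋃₀ E, I.Infinite →
      ∃ F ⊆ I, F.Finite ∧ {S ∈ E | F ⊆ S}.Finite) :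
    ∃ C, IsMinimalCover E C := by
  obtain ⟨P, hP, hcov⟩ := exists_privatelyWitnessed_cover h hVc
  exact ⟨_, hP.isMinimalCover hcov⟩

theorem stmt_6 {α : Type*} (E : Set (Set α))
    (hEc : E.Countable) (hVc : (⋃₀ E).Countable)
    (h : ∀ I ⊆ ⋃₀ E, I.Infinite →
      ∃ F ⊆ I, F.Finite ∧ {S ∈ E | F ⊆ S}.Finite) :
    ∃ C, IsMinimalCover E C :=
  stmt_6_general E hVc h
end
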